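/- arXiv:2406.04245 — 2 statements merged into one kernel-verified Lean document; each statement's English description precedes it below -/
import Mathlib

section
/- Let I ⊆ ℝ be an open interval and let f : ℝ → ℝ be continuously differentiable on I, with derivative f'. Let A be an n×n Hermitian complex matrix whose eigenvalues all lie in I, and let H be an n×n Hermitian complex matrix. Then the function t ↦ Re Tr( f(A + t·H) ) is differentiable at t = 0 with derivative Re Tr( f'(A) · H ), where for a Hermitian matrix M, f(M) and f'(A) are defined by applying f (resp. f') to the eigenvalues via the continuous functional calculus. -/
/-!
Diagonalise `A = ∑ λᵢ uᵢuᵢ*` and `A + tH = ∑ μⱼ vⱼvⱼ*`. The overlaps `Pᵢⱼ = |⟨uᵢ, vⱼ⟩|²` form a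
doubly stochastic matrix with `Tr (g(A) h(A + tH)) = ∑ Pᵢⱼ g(λᵢ) h(μⱼ)`, so for the Taylor remainder
`R(x, y) = f y - f x - f' x (y - x)`

  `Tr f(A + tH) - Tr f(A) - t Tr (f'(A) H) = ∑ Pᵢⱼ R(λᵢ, μⱼ)`  and  `∑ Pᵢⱼ (μⱼ - λᵢ)² = t² Tr H²`.

The second identity puts each `μⱼ` within `|t| √(Tr H²)` of some `λᵢ`, so for small `t` all these
eigenvalues lie in a compact convex neighbourhood `K ⊆ I` of the spectrum of `A`. Uniform continuity
of `f'` on `K` gives `|R(x, y)| ≤ ε |y - x| + C_ε (y - x)²` there, and Cauchy–Schwarz bounds the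
remainder sum by `ε √(n Tr H²) |t| + C_ε t² Tr H² = o(t)`.
-/

open Matrix Filter Topology Asymptotics Metric

lemma abs_taylor_remainder_le_of_abs_deriv_sub_le {f f' : ℝ → ℝ} {s : Set ℝ} (hs : Convex ℝ s)
    (hf : ∀ z ∈ s, HasDerivAt f (f' z) z) {x y ε : ℝ} (hx : x ∈ s) (hy : y ∈ s)
    (hf' : ∀ z ∈ s, |f' z - f' x| ≤ ε) :
    |f y - f x - f' x * (y - x)| ≤ ε * |y - x| := by
  have hg : ∀ z ∈ s, HasDerivWithinAt (fun w => f w - f' x * w) (f' z - f' x) s z :=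
    fun z hz => ((hf z hz).sub (by simpa using (hasDerivAt_id z).const_mul (f' x))).hasDerivWithinAt
  have hmvt := hs.norm_image_sub_le_of_norm_hasDerivWithin_le hg hf' hx hy
  rw [Real.norm_eq_abs, Real.norm_eq_abs] at hmvt
  convert hmvt using 2
  ring

lemma IsCompact.exists_abs_taylor_remainder_le {f f' : ℝ → ℝ} {K : Set ℝ} (hK : IsCompact K)
    (hKc : Convex ℝ K) (hf : ∀ x ∈ K, HasDerivAt f (f' x) x) (hf' : ContinuousOn f' K)
    {ε : ℝ} (hε : 0 < ε) :
    ∃ C, ∀ x ∈ K, ∀ y ∈ K, |f y - f x - f' x * (y - x)| ≤ ε * |y - x| + C * (y - x) ^ 2 := by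
  obtain ⟨δ, hδ, hδf'⟩ :=
    Metric.uniformContinuousOn_iff.1 (hK.uniformContinuousOn_of_continuous hf') ε hε
  have hfK : ContinuousOn f K := fun x hx => (hf x hx).continuousAt.continuousWithinAt
  obtain ⟨B, hB⟩ := (hK.prod hK).exists_bound_of_continuousOn
    (f := fun p : ℝ × ℝ => f p.2 - f p.1 - f' p.1 * (p.2 - p.1)) <| by
      have h1 := hfK.comp continuous_snd.continuousOn fun p (hp : p ∈ K ×ˢ K) => hp.2
      have h2 := hfK.comp continuous_fst.continuousOn fun p (hp : p ∈ K ×ˢ K) => hp.1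
      have h3 := hf'.comp continuous_fst.continuousOn fun p (hp : p ∈ K ×ˢ K) => hp.1
      exact (h1.sub h2).sub (h3.mul (continuous_snd.sub continuous_fst).continuousOn)
  refine ⟨|B| / δ ^ 2, fun x hx y hy => ?_⟩
  have hC : 0 ≤ |B| / δ ^ 2 * (y - x) ^ 2 := by positivity
  rcases lt_or_ge |y - x| δ with hxy | hxy
  · have hnear := abs_taylor_remainder_le_of_abs_deriv_sub_le (hKc.inter (convex_ball x δ))
      (fun z hz => hf z hz.1) ⟨hx, mem_ball_self hδ⟩ ⟨hy, by rwa [mem_ball, Real.dist_eq]⟩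
      fun z hz => (hδf' z hz.1 x hx (mem_ball.1 hz.2)).le
    linarith
  · have hfar : |f y - f x - f' x * (y - x)| ≤ |B| := (hB (x, y) ⟨hx, hy⟩).trans (le_abs_self B)
    have hBsq : |B| ≤ |B| / δ ^ 2 * (y - x) ^ 2 := by
      rw [div_mul_eq_mul_div, le_div_iff₀ (by positivity)]
      exact mul_le_mul_of_nonneg_left (by nlinarith [sq_abs (y - x)]) (abs_nonneg B)
    nlinarith [abs_nonneg (y - x)]

lemma Asymptotics.isLittleO_id_of_forall_eventually_abs_le {E : ℝ → ℝ} (a : ℝ)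
    (h : ∀ ε > 0, ∃ C, ∀ᶠ t in 𝓝 0, |E t| ≤ ε * a * |t| + C * t ^ 2) :
    E =o[𝓝 0] fun t => t := by
  refine isLittleO_iff.2 fun ε hε => ?_
  obtain ⟨C, hC⟩ := h (ε / (2 * (|a| + 1))) (by positivity)
  filter_upwards [hC, isLittleO_iff.1 (isLittleO_pow_id (𝕜 := ℝ) one_lt_two)
    (c := ε / (2 * (|C| + 1))) (by positivity)] with t hEt ht2
  simp only [Real.norm_eq_abs, abs_pow, sq_abs] at ht2 ⊢
  have ha : ε / (2 * (|a| + 1)) * a ≤ ε / 2 := by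
    rw [div_mul_eq_mul_div, div_le_div_iff₀ (by positivity) two_pos]
    nlinarith [le_abs_self a]
  have hC' : |C| * (ε / (2 * (|C| + 1))) ≤ ε / 2 := by
    rw [mul_div_assoc', div_le_div_iff₀ (by positivity) two_pos]
    nlinarith [abs_nonneg C]
  have hquad : C * t ^ 2 ≤ ε / 2 * |t| :=
    calc C * t ^ 2 ≤ |C| * (ε / (2 * (|C| + 1)) * |t|) :=
          mul_le_mul (le_abs_self C) ht2 (sq_nonneg t) (abs_nonneg C)
      _ ≤ ε / 2 * |t| := by rw [← mul_assoc]; exact mul_le_mul_of_nonneg_right hC' (abs_nonneg t)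
  nlinarith [mul_le_mul_of_nonneg_right ha (abs_nonneg t)]

lemma Finset.sum_mul_abs_le_sqrt {ι : Type*} (s : Finset ι) {w : ι → ℝ} (hw : ∀ i ∈ s, 0 ≤ w i)
    (d : ι → ℝ) : ∑ i ∈ s, w i * |d i| ≤ √((∑ i ∈ s, w i) * ∑ i ∈ s, w i * d i ^ 2) :=
  (le_abs_self _).trans <| Real.abs_le_sqrt <|
    s.sum_sq_le_sum_mul_sum_of_sq_le_mul hw (fun i hi => mul_nonneg (hw i hi) (sq_nonneg _))
      fun i _ => le_of_eq <| by rw [mul_pow, sq_abs]; ring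

lemma abs_sum_sum_mul_le {ι κ : Type*} [Fintype ι] [Fintype κ] {w R d : ι → κ → ℝ}
    (hw : ∀ i j, 0 ≤ w i j) {ε C : ℝ} (hε : 0 ≤ ε)
    (hR : ∀ i j, |R i j| ≤ ε * |d i j| + C * d i j ^ 2) :
    |∑ i, ∑ j, w i j * R i j| ≤
      ε * √((∑ i, ∑ j, w i j) * ∑ i, ∑ j, w i j * d i j ^ 2) + C * ∑ i, ∑ j, w i j * d i j ^ 2 := by
  simp only [← Fintype.sum_prod_type']
  calc |∑ p : ι × κ, w p.1 p.2 * R p.1 p.2|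
      ≤ ∑ p : ι × κ, w p.1 p.2 * (ε * |d p.1 p.2| + C * d p.1 p.2 ^ 2) := by
        refine (Finset.abs_sum_le_sum_abs _ _).trans (Finset.sum_le_sum fun p _ => ?_)
        rw [abs_mul, abs_of_nonneg (hw p.1 p.2)]
        exact mul_le_mul_of_nonneg_left (hR _ _) (hw p.1 p.2)
    _ = ε * ∑ p : ι × κ, w p.1 p.2 * |d p.1 p.2| + C * ∑ p : ι × κ, w p.1 p.2 * d p.1 p.2 ^ 2 := by
        simp only [Finset.mul_sum, ← Finset.sum_add_distrib]
        exact Finset.sum_congr rfl fun p _ => by ring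
    _ ≤ _ := by
        gcongr
        exact Finset.univ.sum_mul_abs_le_sqrt (fun p _ => hw p.1 p.2) _

section DoublyStochastic

variable {n : Type*} [Fintype n] [DecidableEq n] {P : Matrix n n ℝ}

lemma sum_sum_of_mem_doublyStochastic (hP : P ∈ doublyStochastic ℝ n) :
    ∑ i, ∑ j, P i j = Fintype.card n := by
  simp [sum_row_of_mem_doublyStochastic hP]

lemma exists_le_sum_sum_of_mem_doublyStochastic (hP : P ∈ doublyStochastic ℝ n)
    {g : n → n → ℝ} (hg : ∀ i j, 0 ≤ g i j) (j : n) :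
    ∃ i, g i j ≤ ∑ i, ∑ j, P i j * g i j := by
  have : Nonempty n := ⟨j⟩
  obtain ⟨i, hi⟩ := Finite.exists_min (g · j)
  refine ⟨i, ?_⟩
  calc g i j = ∑ i', P i' j * g i j := by
        rw [← Finset.sum_mul, sum_col_of_mem_doublyStochastic hP, one_mul]
    _ ≤ ∑ i', P i' j * g i' j := Finset.sum_le_sum fun i' _ =>
        mul_le_mul_of_nonneg_left (hi i') (nonneg_of_mem_doublyStochastic hP)
    _ ≤ ∑ j', ∑ i', P i' j' * g i' j' :=
        Finset.single_le_sum (f := fun j' => ∑ i', P i' j' * g i' j')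
          (fun j' _ => Finset.sum_nonneg fun i' _ =>
            mul_nonneg (nonneg_of_mem_doublyStochastic hP) (hg i' j')) (Finset.mem_univ j)
    _ = ∑ i, ∑ j, P i j * g i j := Finset.sum_comm

end DoublyStochastic

namespace Matrix

variable {𝕜 n : Type*} [RCLike 𝕜]

lemma IsHermitian.add_real_smul {A H : Matrix n n 𝕜} (hA : A.IsHermitian) (hH : H.IsHermitian)
    (t : ℝ) : (A + t • H).IsHermitian :=
  hA.add (hH.smul (IsSelfAdjoint.all t))

variable [Fintype n] [DecidableEq n]

lemma sum_norm_sq_apply_of_mem_unitaryGroup {U : Matrix n n 𝕜} (hU : U ∈ unitaryGroup n 𝕜)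
    (i : n) : ∑ j, ‖U i j‖ ^ 2 = 1 := by
  have h := congr_fun (congr_fun (mem_unitaryGroup_iff.1 hU) i) i
  simp only [mul_apply, star_apply, RCLike.star_def, RCLike.mul_conj, one_apply_eq] at h
  exact_mod_cast h

lemma trace_conj_diagonal_mul_conj_diagonal (U V : Matrix n n 𝕜) (a b : n → ℝ) :
    (U * diagonal (RCLike.ofReal ∘ a) * star U * (V * diagonal (RCLike.ofReal ∘ b) * star V)).trace
      = ∑ i, ∑ j, ((‖(star U * V) i j‖ ^ 2 * (a i * b j) : ℝ) : 𝕜) := by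
  set W := star U * V
  have hcycle : (U * diagonal (RCLike.ofReal ∘ a) * star U *
      (V * diagonal (RCLike.ofReal ∘ b) * star V)).trace =
      (diagonal (RCLike.ofReal ∘ a) * W * diagonal (RCLike.ofReal ∘ b) * star W).trace := by
    simp only [mul_assoc]
    rw [trace_mul_comm U]
    simp only [W, star_mul, star_star, mul_assoc]
  rw [hcycle, trace]
  refine Finset.sum_congr rfl fun i _ => ?_
  rw [diag_apply, mul_apply]
  refine Finset.sum_congr rfl fun j _ => ?_
  simp only [mul_diagonal, diagonal_mul, star_apply, RCLike.star_def, Function.comp_apply,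
    RCLike.ofReal_mul, RCLike.ofReal_pow, ← RCLike.mul_conj]
  ring

namespace IsHermitian

section Overlap

variable {A B : Matrix n n 𝕜} (hA : A.IsHermitian) (hB : B.IsHermitian)

/-- Entry `(i, j)` is `|⟨uᵢ, vⱼ⟩|²` for the eigenbases `u` of `A` and `v` of `B`. -/
noncomputable def eigenOverlap : Matrix n n ℝ :=
  of fun i j => ‖(star (hA.eigenvectorUnitary : Matrix n n 𝕜) * hB.eigenvectorUnitary) i j‖ ^ 2

lemma eigenOverlap_mem_doublyStochastic : hA.eigenOverlap hB ∈ doublyStochastic ℝ n := by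
  have hW : star (hA.eigenvectorUnitary : Matrix n n 𝕜) * hB.eigenvectorUnitary ∈
      unitaryGroup n 𝕜 :=
    mul_mem (Unitary.star_mem hA.eigenvectorUnitary.2) hB.eigenvectorUnitary.2
  refine mem_doublyStochastic_iff_sum.2 ⟨fun i j => sq_nonneg _,
    sum_norm_sq_apply_of_mem_unitaryGroup hW, fun j => ?_⟩
  simpa [eigenOverlap, star_apply] using
    sum_norm_sq_apply_of_mem_unitaryGroup (Unitary.star_mem hW) j

lemma re_trace_cfc_mul_cfc (g h : ℝ → ℝ) :
    RCLike.re (cfc g A * cfc h B).trace =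
      ∑ i, ∑ j, hA.eigenOverlap hB i j * (g (hA.eigenvalues i) * h (hB.eigenvalues j)) := by
  rw [hA.cfc_eq, hB.cfc_eq, IsHermitian.cfc, IsHermitian.cfc, Unitary.conjStarAlgAut_apply,
    Unitary.conjStarAlgAut_apply, trace_conj_diagonal_mul_conj_diagonal]
  simp [eigenOverlap, map_sum]

lemma sum_eigenOverlap_mul_taylor_remainder (f f' : ℝ → ℝ) :
    ∑ i, ∑ j, hA.eigenOverlap hB i j * (f (hB.eigenvalues j) - f (hA.eigenvalues i)
        - f' (hA.eigenvalues i) * (hB.eigenvalues j - hA.eigenvalues i)) =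
      RCLike.re (cfc f B).trace - RCLike.re (cfc f A).trace
        - RCLike.re (cfc f' A * (B - A)).trace := by
  have hfB : cfc f B = cfc (fun _ : ℝ => 1) A * cfc f B := by rw [cfc_const_one ℝ A, one_mul]
  have hfA : cfc f A = cfc f A * cfc (fun _ : ℝ => 1) B := by rw [cfc_const_one ℝ B, mul_one]
  have hf'A : cfc f' A * (B - A) =
      cfc f' A * cfc (fun x : ℝ => x) B - cfc (fun x => f' x * x) A * cfc (fun _ : ℝ => 1) B := by
    rw [cfc_id' ℝ B, cfc_const_one ℝ B, mul_one,
      cfc_mul f' (fun x => x) A (A.finite_real_spectrum.continuousOn _), cfc_id' ℝ A, mul_sub]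
  rw [hfB, hfA, hf'A, trace_sub, map_sub, hA.re_trace_cfc_mul_cfc hB, hA.re_trace_cfc_mul_cfc hB,
    hA.re_trace_cfc_mul_cfc hB, hA.re_trace_cfc_mul_cfc hB]
  simp only [← Finset.sum_sub_distrib]
  refine Finset.sum_congr rfl fun i _ => Finset.sum_congr rfl fun j _ => ?_
  ring

lemma sum_eigenOverlap_mul_sq_sub :
    ∑ i, ∑ j, hA.eigenOverlap hB i j * (hB.eigenvalues j - hA.eigenvalues i) ^ 2 =
      RCLike.re ((B - A) * (B - A)).trace := by
  -- `(y - x)²` is the Taylor remainder of `x ↦ x²`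
  have h := hA.sum_eigenOverlap_mul_taylor_remainder hB (· ^ 2) (2 * ·)
  rw [cfc_pow_id B 2, cfc_pow_id A 2, cfc_const_mul_id 2 A, ← map_sub, ← map_sub] at h
  convert h using 1
  · refine Finset.sum_congr rfl fun i _ => Finset.sum_congr rfl fun j _ => ?_
    ring
  · congr 1
    simp only [sq, two_smul, mul_sub, sub_mul, add_mul, trace_sub, trace_add, trace_mul_comm B A]
    ring

end Overlap

section Perturbation

variable {A H : Matrix n n 𝕜} (hA : A.IsHermitian) (hH : H.IsHermitian)

lemma sum_eigenOverlap_add_real_smul_mul_taylor_remainder (f f' : ℝ → ℝ) (t : ℝ) :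
    ∑ i, ∑ j, hA.eigenOverlap (hA.add_real_smul hH t) i j *
        (f ((hA.add_real_smul hH t).eigenvalues j) - f (hA.eigenvalues i)
          - f' (hA.eigenvalues i) * ((hA.add_real_smul hH t).eigenvalues j - hA.eigenvalues i)) =
      RCLike.re (cfc f (A + t • H)).trace - RCLike.re (cfc f A).trace
        - t * RCLike.re (cfc f' A * H).trace := by
  rw [sum_eigenOverlap_mul_taylor_remainder, add_sub_cancel_left, mul_smul_comm, trace_smul,
    RCLike.smul_re]

lemma sum_eigenOverlap_add_real_smul_mul_sq_sub (t : ℝ) :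
    ∑ i, ∑ j, hA.eigenOverlap (hA.add_real_smul hH t) i j *
        ((hA.add_real_smul hH t).eigenvalues j - hA.eigenvalues i) ^ 2 =
      t ^ 2 * RCLike.re (H * H).trace := by
  rw [sum_eigenOverlap_mul_sq_sub, add_sub_cancel_left, smul_mul_smul_comm, trace_smul,
    RCLike.smul_re, ← sq]

lemma exists_abs_eigenvalues_add_real_smul_sub_le (t : ℝ) (j : n) :
    ∃ i, |(hA.add_real_smul hH t).eigenvalues j - hA.eigenvalues i| ≤
      |t| * √(RCLike.re (H * H).trace) := by
  obtain ⟨i, hi⟩ := exists_le_sum_sum_of_mem_doublyStochastic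
    (hA.eigenOverlap_mem_doublyStochastic (hA.add_real_smul hH t))
    (fun i j => sq_nonneg ((hA.add_real_smul hH t).eigenvalues j - hA.eigenvalues i)) j
  rw [hA.sum_eigenOverlap_add_real_smul_mul_sq_sub hH t] at hi
  refine ⟨i, (Real.abs_le_sqrt hi).trans_eq ?_⟩
  rw [Real.sqrt_mul (sq_nonneg t), Real.sqrt_sq_eq_abs]

lemma eventually_eigenvalues_add_real_smul_mem_cthickening {r : ℝ} (hr : 0 < r) :
    ∀ᶠ t in 𝓝 0, ∀ j,
      (hA.add_real_smul hH t).eigenvalues j ∈ cthickening r (Set.range hA.eigenvalues) := by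
  have hsmall : ∀ᶠ t in 𝓝 (0 : ℝ), |t| * √(RCLike.re (H * H).trace) < r :=
    (by fun_prop : Continuous fun t : ℝ => |t| * √(RCLike.re (H * H).trace)).continuousAt
      |>.eventually_lt continuousAt_const (by simpa using hr)
  filter_upwards [hsmall] with t ht j
  obtain ⟨i, hi⟩ := hA.exists_abs_eigenvalues_add_real_smul_sub_le hH t j
  exact mem_cthickening_of_dist_le _ _ r _ ⟨i, rfl⟩ (hi.trans ht.le)

end Perturbation

end IsHermitian

end Matrix

/-- **Derivative of a trace functional defined by functional calculus** (Lemma 18 /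
Theorem 28 of the paper, a strengthening of a result of Carlen): if `f : ℝ → ℝ` is
continuously differentiable on an open interval `I` with derivative `f'`, `A` is Hermitian
with all eigenvalues in `I`, and `H` is Hermitian, then `t ↦ Re Tr f(A + t·H)` is
differentiable at `t = 0` with derivative `Re Tr(f'(A)·H)`.  Here `f(M)` denotes applying
`f` to the eigenvalues of the Hermitian matrix `M` via the continuous functional calculus. -/
theorem stmt13 {n : ℕ} (I : Set ℝ) (hIopen : IsOpen I) (hIinterval : Convex ℝ I)
    (f f' : ℝ → ℝ)
    (hderiv : ∀ x ∈ I, HasDerivAt f (f' x) x)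
    (hcont : ContinuousOn f' I)
    (A H : Matrix (Fin n) (Fin n) ℂ)
    (hA : A.IsHermitian) (hH : H.IsHermitian)
    (hspec : ∀ i, hA.eigenvalues i ∈ I) :
    HasDerivAt (fun t : ℝ => ((cfc f (A + t • H)).trace).re)
      (((cfc f' A) * H).trace.re) 0 := by
  have hS := (Set.finite_range hA.eigenvalues).isCompact_convexHull ℝ
  obtain ⟨r, hr, hrI⟩ := hS.exists_cthickening_subset_open hIopen
    (convexHull_min (Set.range_subset_iff.2 hspec) hIinterval)
  set K := cthickening r (convexHull ℝ (Set.range hA.eigenvalues))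
  have hlamK (i : Fin n) : hA.eigenvalues i ∈ K :=
    self_subset_cthickening _ (subset_convexHull ℝ _ ⟨i, rfl⟩)
  have hmuK : ∀ᶠ t in 𝓝 0, ∀ j, (hA.add_real_smul hH t).eigenvalues j ∈ K := by
    filter_upwards [hA.eventually_eigenvalues_add_real_smul_mem_cthickening hH hr] with t ht j
    exact cthickening_subset_of_subset r (subset_convexHull ℝ _) (ht j)
  rw [hasDerivAt_iff_isLittleO_nhds_zero]
  refine isLittleO_id_of_forall_eventually_abs_le √(n * (H * H).trace.re) fun ε hε => ?_
  obtain ⟨C, hC⟩ := hS.cthickening.exists_abs_taylor_remainder_le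
    ((convex_convexHull ℝ _).cthickening r) (fun x hx => hderiv x (hrI hx)) (hcont.mono hrI) hε
  refine ⟨C * (H * H).trace.re, hmuK.mono fun t ht => ?_⟩
  have hP := hA.eigenOverlap_mem_doublyStochastic (hA.add_real_smul hH t)
  have hR := abs_sum_sum_mul_le (fun i j => nonneg_of_mem_doublyStochastic hP (i := i) (j := j))
    hε.le fun i j => hC _ (hlamK i) _ (ht j)
  rw [hA.sum_eigenOverlap_add_real_smul_mul_taylor_remainder hH,
    hA.sum_eigenOverlap_add_real_smul_mul_sq_sub hH, sum_sum_of_mem_doublyStochastic hP,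
    Fintype.card_fin, mul_left_comm, Real.sqrt_mul (sq_nonneg t), Real.sqrt_sq_eq_abs] at hR
  simp only [zero_add, zero_smul, add_zero, smul_eq_mul, RCLike.re_to_complex] at hR ⊢
  linarith
end

section
/- Let K be a compact convex set of n×n complex positive semidefinite matrices such that α·I ∈ K for some real α > 0, and let E be an n×n Hermitian matrix. Define Φ_E(X) = Re Tr(E·X) + Re Tr(X · log X), where log X applies the real logarithm to eigenvalues via the continuous functional calculus with the convention log 0 = 0. If W ∈ K satisfies Φ_E(W) ≤ Φ_E(X) for all X ∈ K, then W is positive definite. -/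
open Matrix
open scoped ComplexOrder

/-!
If `W` had a zero eigenvalue, move it towards `α • 1`: `W_t = (1 - t) W + t α 1` lies in `K` and
is `f_t(W)` for the affine map `f_t x = (1 - t) x + t α`, so its eigenvalues are `f_t(λ_i)`.
Convexity of `x log x` bounds the entropy `∑ f_t(λ_i) log f_t(λ_i)` by the chord, except at the
zero eigenvalue, which contributes an extra `t α log t`. Hence
`Φ_E(W_t) ≤ Φ_E(W) + t (C + α log t)` for a constant `C`, and this is `< Φ_E(W)` for small `t`
because `log t → -∞`.
-/

/-- The matrix logarithm, applying `Real.log` (with `Real.log 0 = 0`) to the eigenvalues of a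
Hermitian matrix via the continuous functional calculus (junk value on non-Hermitian input). -/
noncomputable def matLog {n : ℕ} (M : Matrix (Fin n) (Fin n) ℂ) : Matrix (Fin n) (Fin n) ℂ :=
  cfc Real.log M

/-- `Φ_E(X) = Re Tr(E·X) + Re Tr(X·log X)`. -/
noncomputable def PhiE {n : ℕ} (E X : Matrix (Fin n) (Fin n) ℂ) : ℝ :=
  ((E * X).trace).re + ((X * matLog X).trace).re

open Real Filter Topology Finset

lemma Matrix.IsHermitian.trace_cfc {ι 𝕜 : Type*} [Fintype ι] [DecidableEq ι] [RCLike 𝕜]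
    {A : Matrix ι ι 𝕜} (hA : A.IsHermitian) (f : ℝ → ℝ) :
    (cfc f A).trace = ∑ i, (f (hA.eigenvalues i) : 𝕜) := by
  rw [hA.cfc_eq, IsHermitian.cfc, Unitary.conjStarAlgAut_apply, trace_mul_cycle,
    Unitary.coe_star_mul_self, one_mul, trace_diagonal]
  rfl

lemma Matrix.PosSemidef.exists_eigenvalues_eq_zero {ι 𝕜 : Type*} [Fintype ι] [DecidableEq ι]
    [RCLike 𝕜] {A : Matrix ι ι 𝕜} (hA : A.PosSemidef) (hA' : ¬A.PosDef) :
    ∃ j, hA.isHermitian.eigenvalues j = 0 := by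
  by_contra! h
  exact hA' <| hA.isHermitian.posDef_iff_eigenvalues_pos.2 fun i =>
    (hA.eigenvalues_nonneg i).lt_of_ne' (h i)

lemma re_trace_cfc_mul_matLog_cfc {n : ℕ} {A : Matrix (Fin n) (Fin n) ℂ} (hA : A.IsHermitian)
    (g : ℝ → ℝ) :
    (cfc g A * matLog (cfc g A)).trace.re =
      ∑ i, g (hA.eigenvalues i) * log (g (hA.eigenvalues i)) := by
  have hfin := A.finite_real_spectrum
  rw [matLog, ← cfc_comp log g A hA.isSelfAdjoint ((hfin.image g).continuousOn _)
    (hfin.continuousOn _), ← cfc_mul g _ A (hfin.continuousOn _) (hfin.continuousOn _),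
    hA.trace_cfc, Complex.re_sum]
  simp

lemma sum_mul_log_convexComb_le {ι : Type*} [Fintype ι] {d : ι → ℝ} (hd : ∀ i, 0 ≤ d i)
    {j : ι} (hj : d j = 0) {α t : ℝ} (hα : 0 < α) (ht₀ : 0 < t) (ht₁ : t ≤ 1) :
    ∑ i, ((1 - t) * d i + t * α) * log ((1 - t) * d i + t * α) ≤
      (1 - t) * ∑ i, d i * log (d i) + t * (Fintype.card ι * (α * log α) + α * log t) := by
  classical
  set μ := fun i => (1 - t) * d i + t * α
  set b := fun i => (1 - t) * (d i * log (d i)) + t * (α * log α)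
  have hconv (i : ι) : μ i * log (μ i) ≤ b i := by
    simpa [smul_eq_mul] using convexOn_mul_log.2 (Set.mem_Ici.2 (hd i)) (Set.mem_Ici.2 hα.le)
      (sub_nonneg.2 ht₁) ht₀.le (sub_add_cancel 1 t)
  have hzero : μ j * log (μ j) = b j + t * α * log t := by
    simp only [μ, b, hj, mul_zero, zero_add, log_zero, log_mul ht₀.ne' hα.ne']
    ring
  calc ∑ i, μ i * log (μ i)
      = μ j * log (μ j) + ∑ i ∈ univ.erase j, μ i * log (μ i) :=
        (add_sum_erase _ _ (mem_univ j)).symm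
    _ ≤ b j + t * α * log t + ∑ i ∈ univ.erase j, b i :=
        add_le_add hzero.le (sum_le_sum fun i _ => hconv i)
    _ = ∑ i, b i + t * α * log t := by rw [← add_sum_erase _ _ (mem_univ j)]; ring
    _ = _ := by simp only [b, sum_add_distrib, ← mul_sum, sum_const, card_univ, nsmul_eq_mul]; ring

lemma exists_mem_Ioc_add_mul_log_neg (C : ℝ) {α : ℝ} (hα : 0 < α) :
    ∃ t ∈ Set.Ioc (0 : ℝ) 1, C + α * log t < 0 := by
  have h : Tendsto (fun t => C + α * log t) (𝓝[>] 0) atBot :=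
    tendsto_atBot_add_const_left _ C (tendsto_log_nhdsGT_zero.const_mul_atBot hα)
  obtain ⟨t, hneg, hmem⟩ := ((h.eventually_lt_atBot 0).and (Ioc_mem_nhdsGT zero_lt_one)).exists
  exact ⟨t, hmem, hneg⟩

lemma phiE_convexComb_smul_one_le {n : ℕ} (E : Matrix (Fin n) (Fin n) ℂ)
    {W : Matrix (Fin n) (Fin n) ℂ} (hW : W.PosSemidef) {j : Fin n}
    (hj : hW.isHermitian.eigenvalues j = 0) {α t : ℝ} (hα : 0 < α) (ht₀ : 0 < t) (ht₁ : t ≤ 1) :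
    PhiE E ((1 - t) • W + t • α • (1 : Matrix (Fin n) (Fin n) ℂ)) ≤
      PhiE E W + t * (α * (E.trace).re - PhiE E W + n * (α * log α) + α * log t) := by
  have hH := hW.isHermitian
  have hWt : (1 - t) • W + t • α • (1 : Matrix (Fin n) (Fin n) ℂ) =
      cfc (fun x => (1 - t) * x + t * α) W := by
    rw [cfc_add (a := W) (fun x => (1 - t) * x) (fun _ => t * α),
      cfc_const_mul (1 - t) (fun x => x) W, cfc_id' ℝ W, cfc_const (t * α) W,
      Algebra.algebraMap_eq_smul_one, smul_smul]
  have hentW : (W * matLog W).trace.re = ∑ i, hH.eigenvalues i * log (hH.eigenvalues i) := by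
    simpa only [cfc_id ℝ W, id] using re_trace_cfc_mul_matLog_cfc hH id
  have htrace : ((E * ((1 - t) • W + t • α • 1)).trace).re =
      (1 - t) * ((E * W).trace).re + t * α * (E.trace).re := by
    simp only [mul_add, mul_smul_comm, mul_one, trace_add, trace_smul, Complex.add_re,
      Complex.smul_re, smul_eq_mul]
    ring
  have hent := sum_mul_log_convexComb_le (fun i => hW.eigenvalues_nonneg i) hj hα ht₀ ht₁
  rw [Fintype.card_fin] at hent
  unfold PhiE
  rw [htrace, hentW, hWt, re_trace_cfc_mul_matLog_cfc hH]
  linarith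

theorem stmt15_general {n : ℕ} (K : Set (Matrix (Fin n) (Fin n) ℂ))
    (hKconvex : Convex ℝ K)
    (hKpsd : ∀ X ∈ K, X.PosSemidef)
    (α : ℝ) (hα : 0 < α) (hαK : α • (1 : Matrix (Fin n) (Fin n) ℂ) ∈ K)
    (E : Matrix (Fin n) (Fin n) ℂ)
    (W : Matrix (Fin n) (Fin n) ℂ) (hW : W ∈ K)
    (hmin : ∀ X ∈ K, PhiE E W ≤ PhiE E X) :
    W.PosDef := by
  have hWpsd := hKpsd W hW
  by_contra hnotPD
  obtain ⟨j, hj⟩ := hWpsd.exists_eigenvalues_eq_zero hnotPD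
  obtain ⟨t, ⟨ht₀, ht₁⟩, hneg⟩ := exists_mem_Ioc_add_mul_log_neg
    (α * (E.trace).re - PhiE E W + n * (α * log α)) hα
  have hle := hmin _ (hKconvex hW hαK (sub_nonneg.2 ht₁) ht₀.le (sub_add_cancel 1 t))
  have hlt := phiE_convexComb_smul_one_le E hWpsd hj hα ht₀ ht₁
  linarith [mul_neg_of_pos_of_neg ht₀ hneg]

/-- **Minimizers of `Φ_E` over `K` are positive definite** (Lemma 11 of the paper):
if `K` is a compact convex set of positive semidefinite matrices containing `α·I` for some
`α > 0`, `E` is Hermitian, and `W ∈ K` minimizes `Φ_E` over `K`, then `W` is positive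
definite. -/
theorem stmt15 {n : ℕ} (K : Set (Matrix (Fin n) (Fin n) ℂ))
    (hKcompact : IsCompact K) (hKconvex : Convex ℝ K)
    (hKpsd : ∀ X ∈ K, X.PosSemidef)
    (α : ℝ) (hα : 0 < α) (hαK : α • (1 : Matrix (Fin n) (Fin n) ℂ) ∈ K)
    (E : Matrix (Fin n) (Fin n) ℂ) (hE : E.IsHermitian)
    (W : Matrix (Fin n) (Fin n) ℂ) (hW : W ∈ K)
    (hmin : ∀ X ∈ K, PhiE E W ≤ PhiE E X) :
    W.PosDef :=
  stmt15_general K hKconvex hKpsd α hα hαK E W hW hmin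
end
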